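/- Expansion of the bt-Weingarten function via flip- and hive-weighted monotone factorisations: For every k ≥ 1 and every 𝔪 ∈ 𝒫_k, the following identity holds in (ℤ[b,y])⟦X⟧: Wg^(bt)(𝔪) = Σ_{r≥0} (−X)^r Σ_{τ ∈ Mono(𝔪), ℓ(τ) = r} b^{flip(τ)} (y−1)^{hive(τ)} y^{k−hive(τ)}. -/

import Mathlib

open scoped Classical
open MeasureTheory



/-- A pair partition of `{1, …, 2k}`, encoded as an involution of `ℕ` that
moves exactly the points `1, …, 2k`.  The pairs are the two-element sets `{a, f a}`. -/
structure PairPartition (k : ℕ) where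
  f : ℕ → ℕ
  invol : ∀ a, f (f a) = a
  moves : ∀ a, f a ≠ a ↔ (1 ≤ a ∧ a ≤ 2 * k)

namespace PairPartition

/-- The function underlying the identity (trivial) pair partition
`(1 2 | 3 4 | ⋯ | 2k-1 2k)`. -/
def trivFun (k : ℕ) (a : ℕ) : ℕ :=
  if 1 ≤ a ∧ a ≤ 2 * k then (if a % 2 = 1 then a + 1 else a - 1) else a

/-- The identity pair partition `𝔢_k = (1 2 | 3 4 | ⋯ | 2k-1 2k)`. -/
def triv (k : ℕ) : PairPartition k where
  f := trivFun k
  invol := by intro a; unfold trivFun; split_ifs <;> omega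
  moves := by intro a; unfold trivFun; split_ifs <;> omega

theorem ext' {k : ℕ} {m m' : PairPartition k} (h : m.f = m'.f) : m = m' := by
  cases m; cases m'; simpa using h

/-- The action of the transposition `(i j) ∈ S_{2k}` on pair partitions of `{1, …, 2k}`
(defined to do nothing if `i` or `j` lies outside `{1, …, 2k}`). -/
def swapAct {k : ℕ} (i j : ℕ) (m : PairPartition k) : PairPartition k :=
  if h : 1 ≤ i ∧ i ≤ 2 * k ∧ 1 ≤ j ∧ j ≤ 2 * k then
    { f := fun a => Equiv.swap i j (m.f (Equiv.swap i j a))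
      invol := by intro a; simp [m.invol]
      moves := by
        obtain ⟨hi1, hi2, hj1, hj2⟩ := h
        intro a
        have key : ∀ x y : ℕ, Equiv.swap i j x ≠ y ↔ x ≠ Equiv.swap i j y := by
          intro x y
          constructor
          · intro hxy hc; apply hxy; rw [hc]; simp
          · intro hxy hc; apply hxy; rw [← hc]; simp
        rw [key, ← Equiv.swap_apply_self i j a, Equiv.swap_apply_self i j a]
        rw [m.moves (Equiv.swap i j a)]
        rcases eq_or_ne a i with rfl | hai
        · rw [Equiv.swap_apply_left]; omega
        rcases eq_or_ne a j with rfl | haj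
        · rw [Equiv.swap_apply_right]; omega
        · rw [Equiv.swap_apply_of_ne_of_ne hai haj] }
  else m

/-- Removing the pair `{2k-1, 2k}` from a pair partition: the operation `𝔪 ↦ 𝔪↓`
(defined to return the trivial pair partition if `{2k-1, 2k} ∉ 𝔪`). -/
def down {k : ℕ} (m : PairPartition k) : PairPartition (k - 1) :=
  if h : m.f (2 * k - 1) = 2 * k then
    { f := fun a => if a = 2 * k - 1 ∨ a = 2 * k then a else m.f a
      invol := by
        intro a
        by_cases ha : a = 2 * k - 1 ∨ a = 2 * k
        · simp [ha]
        · have h2k : m.f (2 * k) = 2 * k - 1 := by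
            conv_lhs => rw [← h]
            exact m.invol _
          have hne1 : m.f a ≠ 2 * k - 1 := by
            intro hfa
            have h1 : m.f (m.f a) = m.f (2 * k - 1) := by rw [hfa]
            rw [m.invol, h] at h1
            exact ha (Or.inr h1)
          have hne2 : m.f a ≠ 2 * k := by
            intro hfa
            have h1 : m.f (m.f a) = m.f (2 * k) := by rw [hfa]
            rw [m.invol, h2k] at h1
            exact ha (Or.inl h1)
          simp only [if_neg ha, if_neg (not_or.mpr ⟨hne1, hne2⟩), m.invol]
      moves := by
        intro a
        by_cases ha : a = 2 * k - 1 ∨ a = 2 * k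
        · simp only [if_pos ha]
          rcases ha with ha | ha <;> subst ha <;> constructor <;> intro h' <;> first
            | exact absurd rfl h'
            | omega
        · push_neg at ha
          obtain ⟨ha1, ha2⟩ := ha
          simp only [if_neg (not_or.mpr ⟨ha1, ha2⟩)]
          rw [m.moves a]
          omega }
  else triv (k - 1)

/-- A pair partition as a permutation (involution) of `ℕ`. -/
def perm {k : ℕ} (m : PairPartition k) : Equiv.Perm ℕ :=
  Function.Involutive.toPerm m.f m.invol

end PairPartition

namespace PairPartition

/-- The connected component (cycle) of the multigraph `Γ(𝔪)` containing a vertex `v`: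
the orbit of `v` under the group generated by the involutions `𝔢_k` and `𝔪`. -/
def gammaOrbit {k : ℕ} (m : PairPartition k) (v : ℕ) : Set ℕ :=
  MulAction.orbit (Subgroup.closure {(triv k).perm, m.perm} : Subgroup (Equiv.Perm ℕ)) v

/-- The charge function of `Γ(𝔪)`: `charge m v` holds iff `v` receives charge `+`,
i.e. iff `v` is at even distance (in `Γ(𝔪)`) from the largest label of its cycle.
The vertices at even distance from the largest label `M` of a cycle are exactly the
orbit of `M` under the cyclic group generated by `𝔪 ∘ 𝔢_k`. -/
def charge {k : ℕ} (m : PairPartition k) (v : ℕ) : Prop :=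
  v ∈ MulAction.orbit (Subgroup.zpowers (m.perm * (triv k).perm) : Subgroup (Equiv.Perm ℕ))
        (sSup (gammaOrbit m v))

/-- The weight `ω^(b)(𝔪, (i j)·𝔪)` attached to the transposition `(i j)` acting on `𝔪`:
it is `1` if the charges of `i` and `j` in `Γ(𝔪)` agree, and `b` otherwise. -/
noncomputable def omegab {R : Type*} [CommRing R] (b : R) {k : ℕ}
    (m : PairPartition k) (i j : ℕ) : R :=
  if (charge m i ↔ charge m j) then 1 else b

/-- The number of cycles of `Γ(𝔪)` of length `2ℓ`, i.e. the multiplicity of `ℓ`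
in the coset-type `λ(𝔪)` of `𝔪`. -/
noncomputable def cycleCount {k : ℕ} (m : PairPartition k) (ℓ : ℕ) : ℕ :=
  (((Finset.Icc 1 (2 * k)).filter fun a => (gammaOrbit m a).ncard = 2 * ℓ).card) / (2 * ℓ)

/-- Two pair partitions have the same coset-type iff `Γ(𝔪)` and `Γ(𝔪')` have the same
number of cycles of every length. -/
def SameCosetType {k : ℕ} (m m' : PairPartition k) : Prop :=
  ∀ ℓ : ℕ, cycleCount m ℓ = cycleCount m' ℓ

/-- The pair partition `𝔪` has coset-type the multiset `μ` (a partition of `k`,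
presented as the multiset of its parts). -/
def HasCosetType {k : ℕ} (m : PairPartition k) (μ : Multiset ℕ) : Prop :=
  ∀ ℓ : ℕ, 1 ≤ ℓ → μ.count ℓ = cycleCount m ℓ

/-- All lists of length `n` with entries in the finset `S`. -/
def listsLen (S : Finset (ℕ × ℕ)) : ℕ → Finset (List (ℕ × ℕ))
  | 0 => {[]}
  | n + 1 => (S ×ˢ listsLen S n).image fun p => p.1 :: p.2

/-- Apply a sequence `τ = (τ_1, …, τ_r)` of transpositions (each encoded as a pair)
to a pair partition, the rightmost transposition acting first:
`τ_1 ∘ τ_2 ∘ ⋯ ∘ τ_r · 𝔪`. -/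
def applyFacts {k : ℕ} (l : List (ℕ × ℕ)) (m : PairPartition k) : PairPartition k :=
  l.foldr (fun t acc => swapAct t.1 t.2 acc) m

/-- `l` is a monotone factorisation of the pair partition `𝔪 ∈ 𝒫_k`: a sequence of
transpositions `(a_s b_s)` with `a_s < b_s`, all `b_s` odd, `b_1 ≤ b_2 ≤ ⋯ ≤ b_r`,
and `τ_1 ∘ ⋯ ∘ τ_r · 𝔪 = 𝔢_k`. -/
def IsMonoFact {k : ℕ} (m : PairPartition k) (l : List (ℕ × ℕ)) : Prop :=
  (∀ t ∈ l, 1 ≤ t.1 ∧ t.1 < t.2 ∧ t.2 ≤ 2 * k ∧ Odd t.2) ∧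
  List.Pairwise (· ≤ ·) (l.map Prod.snd) ∧
  applyFacts l m = triv k

/-- The hive number of a monotone factorisation: the number of distinct values among
`b_1, …, b_r`. -/
def hive (l : List (ℕ × ℕ)) : ℕ := (l.map Prod.snd).toFinset.card

/-- The flip number of a monotone factorisation `τ` of `𝔪`: the number of indices `s`
with `ω^(b)(𝔪^(s), τ_s · 𝔪^(s)) = b`, where `𝔪^(s) = τ_{s+1} ∘ ⋯ ∘ τ_r · 𝔪`. -/
noncomputable def flip {k : ℕ} (m : PairPartition k) : List (ℕ × ℕ) → ℕ
  | [] => 0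
  | t :: rest =>
      (if (charge (applyFacts rest m) t.1 ↔ charge (applyFacts rest m) t.2) then 0 else 1)
        + flip m rest

/-- The finset of monotone factorisations of `𝔪 ∈ 𝒫_k` of length `r`. -/
noncomputable def monoFinset {k : ℕ} (m : PairPartition k) (r : ℕ) : Finset (List (ℕ × ℕ)) :=
  (listsLen ((Finset.Icc 1 (2 * k)) ×ˢ (Finset.Icc 1 (2 * k))) r).filter fun l => IsMonoFact m l

/-- A sequence of transpositions is connected (relative to level `k`) if together with the
involution `ι = (1 2)(3 4)⋯(2k-1 2k)` it generates a subgroup acting transitively on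
`{1, …, 2k}`. -/
def IsConnectedFact (k : ℕ) (l : List (ℕ × ℕ)) : Prop :=
  ∀ a ∈ Finset.Icc 1 (2 * k), ∀ b ∈ Finset.Icc 1 (2 * k),
    ∃ σ ∈ Subgroup.closure
        ({(triv k).perm} ∪ {p : Equiv.Perm ℕ | ∃ t ∈ l, p = Equiv.swap t.1 t.2}),
      σ a = b

end PairPartition


noncomputable instance matrixMeasurableSpace {N : ℕ} :
    MeasurableSpace (Matrix (Fin N) (Fin N) ℝ) :=
  inferInstanceAs (MeasurableSpace (Fin N → Fin N → ℝ))

/-- The compact group `O(N)` of real orthogonal `N × N` matrices. -/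
abbrev OrthGroup (N : ℕ) := Matrix.orthogonalGroup (Fin N) ℝ

noncomputable instance orthMeasurableSpace {N : ℕ} : MeasurableSpace (OrthGroup N) :=
  borel _

/-- The diagonal matrix `I_{M,N}` whose first `M` diagonal entries are `1` and whose
remaining entries are `0`. -/
def IMN (N M : ℕ) : Matrix (Fin N) (Fin N) ℝ :=
  Matrix.diagonal fun p => if (p : ℕ) < M then (1 : ℝ) else 0

/-- The map `O ↦ O · I_{M,N} · Oᵀ` from `O(N)` onto the space `A(M,N)` of idempotent
real symmetric `N × N` matrices of rank `M`. -/
def grassMap (N M : ℕ) (O : OrthGroup N) : Matrix (Fin N) (Fin N) ℝ :=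
  (O : Matrix (Fin N) (Fin N) ℝ) * IMN N M * Matrix.transpose (O : Matrix (Fin N) (Fin N) ℝ)


/-- The product `A_{i(1)i(2)} A_{i(3)i(4)} ⋯ A_{i(2k-1)i(2k)}` of matrix entries. -/
def prodEntries {N : ℕ} (k : ℕ) (i : ℕ → Fin N) (A : Matrix (Fin N) (Fin N) ℝ) : ℝ :=
  ∏ a ∈ Finset.range k, A (i (2 * a + 1)) (i (2 * a + 2))



open PairPartition


/-- A step in the (`b`- or `bt`-) Weingarten graph: a type-A edge `𝔪 → (i 2k-1)·𝔪`,
a type-B edge `𝔪 → 𝔪↓`, or a type-C edge `𝔪 → ((i 2k-1)·𝔪)↓`. -/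
inductive WStep where
  | A (i : ℕ) : WStep
  | B : WStep
  | C (i : ℕ) : WStep
deriving DecidableEq

/-- `IsPathTo k 𝔪 ρ` holds iff `ρ` is a path in the `bt`-Weingarten graph from the
pair partition `𝔪 ∈ 𝒫_k` to the empty pair partition. -/
def IsPathTo : (k : ℕ) → PairPartition k → List WStep → Prop
  | 0, _, [] => True
  | _ + 1, _, [] => False
  | 0, _, _ :: _ => False
  | k + 1, m, WStep.A i :: ρ =>
      1 ≤ i ∧ i ≤ 2 * (k + 1) - 2 ∧ IsPathTo (k + 1) (swapAct i (2 * (k + 1) - 1) m) ρ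
  | k + 1, m, WStep.B :: ρ =>
      m.f (2 * (k + 1) - 1) = 2 * (k + 1) ∧ IsPathTo k (down m) ρ
  | k + 1, m, WStep.C i :: ρ =>
      1 ≤ i ∧ i ≤ 2 * (k + 1) - 2 ∧ m.f i = 2 * (k + 1) ∧
        IsPathTo k (down (swapAct i (2 * (k + 1) - 1) m)) ρ

/-- The product of the `b`-dependent edge weights along a path. -/
noncomputable def pathWeight {R : Type*} [CommRing R] (b : R) :
    (k : ℕ) → PairPartition k → List WStep → R
  | _, _, [] => 1
  | 0, _, _ :: _ => 1
  | k + 1, m, WStep.A i :: ρ =>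
      omegab b m i (2 * (k + 1) - 1) * pathWeight b (k + 1) (swapAct i (2 * (k + 1) - 1) m) ρ
  | k + 1, m, WStep.B :: ρ => pathWeight b k (down m) ρ
  | k + 1, m, WStep.C i :: ρ => pathWeight b k (down (swapAct i (2 * (k + 1) - 1) m)) ρ

/-- The number of type-A edges of a path. -/
def countA (l : List WStep) : ℕ :=
  (l.filter fun s => match s with | WStep.A _ => true | _ => false).length

/-- The number of type-B edges of a path. -/
def countB (l : List WStep) : ℕ :=
  (l.filter fun s => match s with | WStep.B => true | _ => false).length

/-- The number of type-C edges of a path. -/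
def countC (l : List WStep) : ℕ :=
  (l.filter fun s => match s with | WStep.C _ => true | _ => false).length

/-- The `b`-Weingarten function `Wg^(b)(𝔪) ∈ ℤ[b]⟦X⟧`: the coefficient of `X^n` is the
sum of `(-1)^{ℓ_A(ρ)} w(ρ)` over all paths `ρ` (with no type-C edges, i.e. paths in the
`b`-Weingarten graph) from `𝔪` to the empty pair partition with `ℓ_A(ρ) + ℓ_B(ρ) = n`.
Here `b` is the polynomial variable of `ℤ[b]`. -/
noncomputable def WgB (k : ℕ) (m : PairPartition k) : PowerSeries (Polynomial ℤ) :=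
  PowerSeries.mk fun n =>
    ∑ᶠ (ρ : List WStep)
      (_ : IsPathTo k m ρ ∧ (∀ i, WStep.C i ∉ ρ) ∧ countA ρ + countB ρ = n),
      (-1 : Polynomial ℤ) ^ countA ρ * pathWeight (Polynomial.X : Polynomial ℤ) k m ρ

/-- The `bt`-Weingarten function `Wg^(bt)(𝔪) ∈ (ℤ[b,y])⟦X⟧`: the coefficient of `X^n` is
the sum of `(-1)^{ℓ_A(ρ)} y^{ℓ_B(ρ)} w(ρ)` over all paths `ρ` in the `bt`-Weingarten graph
from `𝔪` to the empty pair partition with `ℓ_A(ρ) + ℓ_C(ρ) = n`.  Here `b = X 0` and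
`y = X 1` in `ℤ[b,y] = MvPolynomial (Fin 2) ℤ`. -/
noncomputable def WgBT (k : ℕ) (m : PairPartition k) :
    PowerSeries (MvPolynomial (Fin 2) ℤ) :=
  PowerSeries.mk fun n =>
    ∑ᶠ (ρ : List WStep) (_ : IsPathTo k m ρ ∧ countA ρ + countC ρ = n),
      (-1 : MvPolynomial (Fin 2) ℤ) ^ countA ρ * (MvPolynomial.X 1) ^ countB ρ *
        pathWeight (MvPolynomial.X 0 : MvPolynomial (Fin 2) ℤ) k m ρ

/-- The standard basis vector `𝔪` of the free module with basis `𝒫_k`,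
realised as functions `𝒫_k → R`. -/
noncomputable def basisVec {R : Type*} [CommRing R] (k : ℕ) (m : PairPartition k) :
    PairPartition k → R :=
  fun n => if n = m then 1 else 0

/-- The `b`-deformed Jucys–Murphy operator `𝒥_i` acting on the free module with basis
`𝒫_k` (realised as functions `𝒫_k → R`): on basis vectors,
`𝒥_i(𝔪) = ∑_{a=1}^{2i-2} ω^(b)((a 2i-1)·𝔪, 𝔪) · (a 2i-1)·𝔪`. -/
noncomputable def JbOp {R : Type*} [CommRing R] (b : R) {k : ℕ} (i : ℕ)
    (v : PairPartition k → R) : PairPartition k → R :=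
  fun n => ∑ a ∈ Finset.Icc 1 (2 * i - 2),
    omegab b n a (2 * i - 1) * v (swapAct a (2 * i - 1) n)

/-- The (odd) Jucys–Murphy element `J_{2i-1} = ∑_{a=1}^{2i-2} (a
 2i-1)` of the group
algebra of `S_{2k}`, acting on the free module with basis `𝒫_k` via the linear extension
of the `S_{2k}`-action on pair partitions. -/
noncomputable def JoddOp {R : Type*} [CommRing R] {k : ℕ} (i : ℕ)
    (v : PairPartition k → R) : PairPartition k → R :=
  fun n => ∑ a ∈ Finset.Icc 1 (2 * i - 2), v (swapAct a (2 * i - 1) n)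

/-- The vector `𝔭_μ = ∑_{𝔪 : λ(𝔪) = μ} 𝔪`, i.e. the indicator function of the set of
pair partitions of coset-type `μ`. -/
noncomputable def pVec {R : Type*} [CommRing R] (k : ℕ) (μ : Multiset ℕ) :
    PairPartition k → R :=
  fun m => if HasCosetType m μ then 1 else 0

noncomputable def applyPows {R : Type*} [CommRing R] (b : R) {k : ℕ} :
    List (ℕ × ℕ) → (PairPartition k → R) → (PairPartition k → R)
  | [], v => v
  | ia :: rest, v => (JbOp b ia.1)^[ia.2] (applyPows b rest v)


/-- The coefficient ring `ℤ[b,y]⟦X⟧`, with `b = X 0` and `y = X 1`. -/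
abbrev SeriesRing := PowerSeries (MvPolynomial (Fin 2) ℤ)

noncomputable def bS : SeriesRing := PowerSeries.C (MvPolynomial.X 0)
noncomputable def yS : SeriesRing := PowerSeries.C (MvPolynomial.X 1)

/-- The operator-valued power series `(1 + X·𝒥_i)⁻¹ = ∑_{j ≥ 0} (-X)^j 𝒥_i^j`
applied to a vector `v`, computed coefficientwise. -/
noncomputable def invApply (k : ℕ) (i : ℕ) (v : PairPartition k → SeriesRing) :
    PairPartition k → SeriesRing :=
  fun n => PowerSeries.mk fun d =>
    ∑ᶠ j : ℕ, PowerSeries.coeff d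
      ((-(PowerSeries.X : SeriesRing)) ^ j * ((JbOp bS i)^[j] v) n)

/-- The vector `(y + X𝒥_j)(1 + X𝒥_j)⁻¹ ⋯ (y + X𝒥_1)(1 + X𝒥_1)⁻¹ (𝔢_k)`. -/
noncomputable def prodVec (k : ℕ) : ℕ → (PairPartition k → SeriesRing)
  | 0 => fun n => if n = triv k then 1 else 0
  | j + 1 => fun n =>
      yS * invApply k (j + 1) (prodVec k j) n +
        PowerSeries.X * (JbOp bS (j + 1) (invApply k (j + 1) (prodVec k j))) n


open MvPolynomial

/-- The formal partial derivative `∂_n = ∂/∂p_n` on the polynomial ring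
`K[p_1, p_2, …]` (the variables being indexed by positive naturals);
junk value `0` for `n = 0`. -/
noncomputable def pd (K : Type*) [CommRing K] (n : ℕ) :
    MvPolynomial ℕ+ K →ₗ[K] MvPolynomial ℕ+ K :=
  if h : 0 < n then (pderiv (⟨n, h⟩ : ℕ+)).toLinearMap else 0

/-- The variable `p_n` of `K[p_1, p_2, …]`; junk value `0` for `n = 0`. -/
noncomputable def pvar (K : Type*) [CommRing K] (n : ℕ) : MvPolynomial ℕ+ K :=
  if h : 0 < n then X ⟨n, h⟩ else 0

section SumOp

variable (K : Type*) [CommRing K]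

lemma sumOp_support_subset (m : ℕ) (f : MvPolynomial ℕ+ K) :
    (Function.support fun i => ((i + m : ℕ) : K) • (pvar K i * pd K (i + m) f)) ⊆
      ((fun i => i + m) ⁻¹' ↑(f.vars.image (fun v : ℕ+ => (v : ℕ)))) := by
  intro i hi
  simp only [Function.mem_support] at hi
  by_contra hmem
  apply hi
  rcases Nat.eq_zero_or_pos (i + m) with h0 | h0
  · have hi0 : i = 0 := by omega
    subst hi0
    simp [pvar]
  · have hnot : (⟨i + m, h0⟩ : ℕ+) ∉ f.vars := by
      intro hv
      apply hmem
      simp only [Set.mem_preimage, Finset.coe_image, Set.mem_image, Finset.mem_coe]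
      exact ⟨⟨i + m, h0⟩, hv, rfl⟩
    have hz : pd K (i + m) f = 0 := by
      rw [show pd K (i + m) = (pderiv (⟨i + m, h0⟩ : ℕ+)).toLinearMap from dif_pos h0]
      have := pderiv_eq_zero_of_notMem_vars (R := K) hnot
      first | simpa using this | exact this
    rw [hz, mul_zero, smul_zero]

lemma sumOp_support_finite (m : ℕ) (f : MvPolynomial ℕ+ K) :
    (Function.support fun i => ((i + m : ℕ) : K) • (pvar K i * pd K (i + m) f)).Finite := by
  apply Set.Finite.subset _ (sumOp_support_subset K m f)
  apply Set.Finite.preimage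
  · exact (add_left_injective m).injOn
  · exact (f.vars.image (fun v : ℕ+ => (v : ℕ))).finite_toSet

/-- The operator `∑_{i ≥ 1} (i+m) p_i ∂_{i+m}` on `K[p_1, p_2, …]`
(a well-defined linear operator, the sum being locally finite on polynomials). -/
noncomputable def sumOp (m : ℕ) : MvPolynomial ℕ+ K →ₗ[K] MvPolynomial ℕ+ K where
  toFun f := ∑ᶠ i : ℕ, ((i + m : ℕ) : K) • (pvar K i * pd K (i + m) f)
  map_add' x y := by
    have key : ∀ i : ℕ, ((i + m : ℕ) : K) • (pvar K i * pd K (i + m) (x + y)) =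
        ((i + m : ℕ) : K) • (pvar K i * pd K (i + m) x) +
          ((i + m : ℕ) : K) • (pvar K i * pd K (i + m) y) := by
      intro i
      rw [map_add, mul_add, smul_add]
    try dsimp only
    rw [finsum_congr key]
    exact finsum_add_distrib (sumOp_support_finite K m x) (sumOp_support_finite K m y)
  map_smul' c x := by
    have key : ∀ i : ℕ, ((i + m : ℕ) : K) • (pvar K i * pd K (i + m) (c • x)) =
        c • (((i + m : ℕ) : K) • (pvar K i * pd K (i + m) x)) := by
      intro i
      rw [_root_.map_smul, smul_comm]
      congr 1
      rw [mul_smul_comm]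
    try dsimp only
    rw [finsum_congr key]
    simp only [RingHom.id_apply]
    exact (smul_finsum' c (sumOp_support_finite K m x)).symm
end SumOp

/-- The `bt`-deformed Virasoro-type operator `L_m` of Theorem 3.5/4.7, acting on the
polynomial ring `K[p_1, p_2, …]`. -/
noncomputable def Lop (K : Type*) [CommRing K] (b t z hbar : K) (m : ℕ) :
    MvPolynomial ℕ+ K →ₗ[K] MvPolynomial ℕ+ K :=
  (((m : K) * Ring.inverse hbar) • pd K m)
    - (1 + b) • (∑ i ∈ Finset.Ioo 0 m,
        (((i : ℕ) : K) * (((m - i : ℕ)) : K)) • (pd K i ∘ₗ pd K (m - i)))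
    - sumOp K m
    - ((b * (m : K) * ((m - 1 : ℕ) : K)) • pd K m)
    - ((z * Ring.inverse hbar * (t - 1) * ((m - 1 : ℕ) : K)) • pd K (m - 1))
    - (if m = 1 then (z * Ring.inverse hbar * Ring.inverse hbar * Ring.inverse (1 + b)) •
        (LinearMap.id : MvPolynomial ℕ+ K →ₗ[K] MvPolynomial ℕ+ K) else 0)
open PairPartition

/-- `i : {1,…,2k} → {1,…,N}` is admissible for `𝔪`: `{a,b} ∈ 𝔪` implies `i a = i b`. -/
def Admissible {N : ℕ} (k : ℕ) (m : PairPartition k) (i : ℕ → Fin N) : Prop :=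
  ∀ a, 1 ≤ a → a ≤ 2 * k → i (m.f a) = i a

/-- `i : {1,…,2k} → {1,…,N}` is strongly admissible for `𝔪`:
for `a, b ∈ {1,…,2k}`, `i a = i b` holds iff `a = b` or `{a,b} ∈ 𝔪`. -/
def StronglyAdmissible {N : ℕ} (k : ℕ) (m : PairPartition k) (i : ℕ → Fin N) : Prop :=
  ∀ a b, 1 ≤ a → a ≤ 2 * k → 1 ≤ b → b ≤ 2 * k → (i a = i b ↔ (a = b ∨ m.f a = b))

/-- `ĥ^{(t)}_r(𝔪)` evaluated at a real number `t`: the weighted count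
`∑_{τ ∈ Mono(𝔪), ℓ(τ) = r} t^{hive(τ)}`. -/
noncomputable def hiveSum {k : ℕ} (m : PairPartition k) (r : ℕ) (t : ℝ) : ℝ :=
  ∑ l ∈ monoFinset m r, t ^ hive l

/-- The `bt`-monotone count `∑_{τ ∈ Mono(𝔪), ℓ(τ) = r} b^{flip(τ)} t^{hive(τ)}`
in `ℤ[b,t]`, with `b = X 0` and `t = X 1`. -/
noncomputable def btSum {k : ℕ} (m : PairPartition k) (r : ℕ) : MvPolynomial (Fin 2) ℤ :=
  ∑ l ∈ monoFinset m r,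
    (MvPolynomial.X 0 : MvPolynomial (Fin 2) ℤ) ^ (flip m l) *
      (MvPolynomial.X 1) ^ (hive l)

/-- The connected `bt`-monotone count
`∑_{τ ∈ CMono(𝔪), ℓ(τ) = r} b^{flip(τ)} t^{hive(τ)}` in `ℚ[b,t]`,
with `b = X 0` and `t = X 1`. -/
noncomputable def cMonoSum {k : ℕ} (m : PairPartition k) (r : ℕ) : MvPolynomial (Fin 2) ℚ :=
  ∑ l ∈ (monoFinset m r).filter (fun l => IsConnectedFact k l),
    (MvPolynomial.X 0 : MvPolynomial (Fin 2) ℚ) ^ (flip m l) *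
      (MvPolynomial.X 1) ^ (hive l)

/-- The operator `c + J_{2i-1}` on the free module with basis `𝒫_k`. -/
noncomputable def affJoddOp {k : ℕ} (c : ℝ) (i : ℕ) (v : PairPartition k → ℝ) :
    PairPartition k → ℝ :=
  fun n => c * v n + JoddOp i v n

/-!
Both sides are computed by peeling off the top pair `{2k+1, 2k+2}`. A path in the
`bt`-Weingarten graph starts with an A-edge `(i 2k+1)`, a B-edge `𝔪 ↦ 𝔪↓` (weight `y`)
or a C-edge. A monotone factorisation either avoids `2k+1`, and is then a factorisation of
`𝔪↓` with one more unused hive (a factor `y`), or ends with some `(i 2k+1)`; removing that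
transposition leaves a factorisation of `(i 2k+1)·𝔪` and costs the weight `ω^(b)`, plus a new
hive `y - 1` if `2k+1` was used only once. Flip numbers survive `↓` because the charges of
`1, …, 2k` only see cycles of `Γ` other than the top pair. So `(-1)^n` times the factorisation
sums obey the recursion of the path sums, in which the A- and C-edges at `i` merge into the
factor `y - 1` (a C-edge exists only when `ω = 1`); induction on `(k, n)` concludes.
-/

open MulAction in
lemma Equiv.Perm.orbit_closure_subset_of_eqOn {α : Type*} {s s' : Set (Equiv.Perm α)}
    {A : Set α} (hA : A.Finite)
    (h : ∀ g ∈ s, Set.MapsTo g A A ∧ ∃ g' ∈ s', Set.EqOn g g' A) {v : α} (hv : v ∈ A) :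
    orbit (Subgroup.closure s) v ⊆ A ∩ orbit (Subgroup.closure s') v := by
  rintro _ ⟨⟨g, hg⟩, rfl⟩
  suffices ∀ a ∈ A, g a ∈ A ∧ g a ∈ orbit (Subgroup.closure s') a from this v hv
  induction hg using Subgroup.closure_induction with
  | mem g hg =>
    obtain ⟨hmaps, g', hg', heq⟩ := h g hg
    exact fun a ha => ⟨hmaps ha, heq ha ▸ ⟨⟨g', Subgroup.subset_closure hg'⟩, rfl⟩⟩
  | one => exact fun a ha => ⟨ha, mem_orbit_self a⟩
  | mul g₁ g₂ _ _ ih₁ ih₂ =>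
    intro a ha
    obtain ⟨h₂A, h₂o⟩ := ih₂ a ha
    obtain ⟨h₁A, h₁o⟩ := ih₁ _ h₂A
    exact ⟨h₁A, orbit_eq_iff.2 h₂o ▸ h₁o⟩
  | inv g _ ih =>
    intro a ha
    -- `g` permutes the finite set `A`, so `g⁻¹ a` is a point of `A` mapped to `a`.
    obtain ⟨b, hb, rfl⟩ := ((hA.injOn_iff_bijOn_of_mapsTo fun b hb => (ih b hb).1).1
      g.injective.injOn).surjOn ha
    rw [show g⁻¹ (g b) = b from g.symm_apply_apply b]
    exact ⟨hb, mem_orbit_symm.1 (ih b hb).2⟩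

open MulAction in
lemma Equiv.Perm.orbit_closure_eq_of_eqOn {α : Type*} {s s' : Set (Equiv.Perm α)}
    {A : Set α} (hA : A.Finite)
    (h : ∀ g ∈ s, Set.MapsTo g A A ∧ ∃ g' ∈ s', Set.EqOn g g' A)
    (h' : ∀ g ∈ s', Set.MapsTo g A A ∧ ∃ g' ∈ s, Set.EqOn g g' A)
    {v : α} (hv : v ∈ A) :
    orbit (Subgroup.closure s) v = orbit (Subgroup.closure s') v :=
  subset_antisymm (fun _ hx => (orbit_closure_subset_of_eqOn hA h hv hx).2)
    (fun _ hx => (orbit_closure_subset_of_eqOn hA h' hv hx).2)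

lemma List.finite_setOf_length_le_forall_mem {α : Type*} {S : Set α} (hS : S.Finite) (N : ℕ) :
    {l : List α | l.length ≤ N ∧ ∀ x ∈ l, x ∈ S}.Finite := by
  have := hS.to_subtype
  refine ((List.finite_length_le S N).image (List.map (↑))).subset ?_
  rintro l ⟨hN, hl⟩
  lift l to List S using hl
  exact ⟨l, by simpa using hN, rfl⟩

lemma Finset.sum_eq_sum_sum_cons {α M : Type*} [AddCommMonoid M] {T : Finset (List α)}
    (H : Finset α) (U : α → Finset (List α)) (hnil : [] ∉ T)
    (hcons : ∀ s ρ, s :: ρ ∈ T ↔ s ∈ H ∧ ρ ∈ U s) (g : List α → M) :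
    ∑ ρ ∈ T, g ρ = ∑ s ∈ H, ∑ ρ ∈ U s, g (s :: ρ) := by
  rw [← Finset.sum_sigma _ _ fun p : (_ : α) × List α => g (p.1 :: p.2)]
  symm
  refine Finset.sum_bij (fun p _ => p.1 :: p.2) (fun p hp => (hcons _ _).2 (by simpa using hp))
    ?_ ?_ fun _ _ => rfl
  · rintro ⟨s, ρ⟩ - ⟨s', ρ'⟩ - h
    obtain ⟨rfl, rfl⟩ := List.cons.inj h
    rfl
  · rintro (_ | ⟨s, ρ⟩) hρ
    · exact absurd hρ hnil
    · exact ⟨⟨s, ρ⟩, by simpa using (hcons s ρ).1 hρ, rfl⟩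

namespace PairPartition

variable {k : ℕ}

lemma f_eq_self (m : PairPartition k) {a : ℕ} (h : ¬(1 ≤ a ∧ a ≤ 2 * k)) : m.f a = a :=
  not_not.1 fun hne => h ((m.moves a).1 hne)

lemma f_le (m : PairPartition k) {a : ℕ} (h : a ≤ 2 * k) : m.f a ≤ 2 * k := by
  by_cases ha : 1 ≤ a
  · have hne : m.f (m.f a) ≠ m.f a := by
      rw [m.invol]; exact fun h' => (m.moves a).2 ⟨ha, h⟩ h'.symm
    exact ((m.moves _).1 hne).2
  · rwa [m.f_eq_self (by omega)]

lemma eq_triv_of_level_zero (m : PairPartition 0) : m = triv 0 :=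
  ext' <| funext fun a => by
    rw [m.f_eq_self (by omega)]; simp only [triv, trivFun]; split_ifs <;> omega

lemma triv_f_of_le {k' : ℕ} (hk : k' ≤ k) {a : ℕ} (ha : a ≤ 2 * k') :
    (triv k).f a = (triv k').f a := by
  simp only [triv, trivFun]; split_ifs <;> omega

lemma triv_f_top : (triv (k + 1)).f (2 * k + 1) = 2 * (k + 1) := by
  simp only [triv, trivFun]; split_ifs <;> omega

lemma triv_f_top' : (triv (k + 1)).f (2 * (k + 1)) = 2 * k + 1 := by
  simp only [triv, trivFun]; split_ifs <;> omega

lemma swapAct_f {i j : ℕ} (m : PairPartition k)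
    (h : 1 ≤ i ∧ i ≤ 2 * k ∧ 1 ≤ j ∧ j ≤ 2 * k) (a : ℕ) :
    (swapAct i j m).f a = Equiv.swap i j (m.f (Equiv.swap i j a)) := by
  rw [swapAct, dif_pos h]

lemma swapAct_eq_self {i j : ℕ} (m : PairPartition k)
    (h : ¬(1 ≤ i ∧ i ≤ 2 * k ∧ 1 ≤ j ∧ j ≤ 2 * k)) : swapAct i j m = m := by
  rw [swapAct, dif_neg h]

lemma swapAct_swapAct (i j : ℕ) (m : PairPartition k) : swapAct i j (swapAct i j m) = m := by
  by_cases h : 1 ≤ i ∧ i ≤ 2 * k ∧ 1 ≤ j ∧ j ≤ 2 * k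
  · exact ext' <| funext fun a => by simp [swapAct_f _ h]
  · rw [swapAct_eq_self _ h, swapAct_eq_self _ h]

lemma swapAct_f_of_ne {i j x : ℕ} (m : PairPartition k) (hxi : x ≠ i) (hxj : x ≠ j)
    (hfi : m.f x ≠ i) (hfj : m.f x ≠ j) : (swapAct i j m).f x = m.f x := by
  by_cases h : 1 ≤ i ∧ i ≤ 2 * k ∧ 1 ≤ j ∧ j ≤ 2 * k
  · rw [swapAct_f m h, Equiv.swap_apply_of_ne_of_ne hxi hxj,
      Equiv.swap_apply_of_ne_of_ne hfi hfj]
  · rw [swapAct_eq_self m h]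

lemma swapAct_f_top_iff_of_le {i j : ℕ} (m : PairPartition (k + 1)) (hi : i ≤ 2 * k)
    (hj : j ≤ 2 * k) :
    (swapAct i j m).f (2 * k + 1) = 2 * (k + 1) ↔ m.f (2 * k + 1) = 2 * (k + 1) := by
  have key : ∀ m' : PairPartition (k + 1), m'.f (2 * k + 1) = 2 * (k + 1) →
      (swapAct i j m').f (2 * k + 1) = 2 * (k + 1) := fun m' h => by
    rw [swapAct_f_of_ne m' (by omega) (by omega) (by omega) (by omega), h]
  exact ⟨fun h => swapAct_swapAct i j m ▸ key _ h, key m⟩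

lemma swapAct_top_f_top_iff (m : PairPartition (k + 1)) {i : ℕ} (hi1 : 1 ≤ i)
    (hi2 : i ≤ 2 * k) :
    (swapAct i (2 * k + 1) m).f (2 * k + 1) = 2 * (k + 1) ↔ m.f i = 2 * (k + 1) := by
  rw [swapAct_f m (by omega), Equiv.swap_apply_right,
    ← (Equiv.swap i (2 * k + 1)).injective.eq_iff, Equiv.swap_apply_self,
    Equiv.swap_apply_of_ne_of_ne (by omega) (by omega)]

lemma down_f (m : PairPartition (k + 1)) (h : m.f (2 * k + 1) = 2 * (k + 1)) (a : ℕ) :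
    (down m).f a = if a = 2 * k + 1 ∨ a = 2 * (k + 1) then a else m.f a := by
  have e : 2 * (k + 1) - 1 = 2 * k + 1 := by omega
  rw [down, dif_pos (e ▸ h)]; simp only [e]

lemma down_triv : down (triv (k + 1)) = triv k :=
  ext' <| funext fun a => by
    rw [down_f _ triv_f_top]
    simp only [triv, trivFun]
    split_ifs <;> omega

lemma down_eq_triv_iff (m : PairPartition (k + 1)) (h : m.f (2 * k + 1) = 2 * (k + 1)) :
    down m = triv k ↔ m = triv (k + 1) := by
  refine ⟨fun hd => ext' <| funext fun a => ?_, fun hm => hm ▸ down_triv⟩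
  have hda := congrArg (fun p => p.f a) hd
  simp only [down_f m h] at hda
  have h' : m.f (2 * (k + 1)) = 2 * k + 1 := by rw [← h, m.invol]
  split_ifs at hda with ha
  · rcases ha with rfl | rfl
    · rw [h, triv_f_top]
    · rw [h', triv_f_top']
  · rw [hda]; simp only [triv, trivFun]; split_ifs <;> omega

lemma down_swapAct (m : PairPartition (k + 1)) (h : m.f (2 * k + 1) = 2 * (k + 1)) {i j : ℕ}
    (hi : i ≤ 2 * k) (hj : j ≤ 2 * k) : down (swapAct i j m) = swapAct i j (down m) := by
  by_cases hij : 1 ≤ i ∧ 1 ≤ j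
  · refine ext' <| funext fun a => ?_
    have fix : ∀ x, x = 2 * k + 1 ∨ x = 2 * (k + 1) → Equiv.swap i j x = x := fun x hx =>
      Equiv.swap_apply_of_ne_of_ne (by omega) (by omega)
    rw [down_f _ ((swapAct_f_top_iff_of_le m hi hj).2 h), swapAct_f (down m) (by omega),
      swapAct_f m (by omega)]
    by_cases ha : a = 2 * k + 1 ∨ a = 2 * (k + 1)
    · rw [if_pos ha, fix a ha, down_f m h, if_pos ha, fix a ha]
    · have hsa : ¬(Equiv.swap i j a = 2 * k + 1 ∨ Equiv.swap i j a = 2 * (k + 1)) := by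
        rintro (hs | hs) <;> exact ha (by
          have := congrArg (Equiv.swap i j) hs
          rw [Equiv.swap_apply_self, fix _ (by omega)] at this; omega)
      rw [if_neg ha, down_f m h, if_neg hsa]
  · rw [swapAct_eq_self m (by omega), swapAct_eq_self (down m) (by omega)]

lemma charge_perm_mul_triv_apply (m : PairPartition k) (v : ℕ) :
    charge m ((m.perm * (triv k).perm) v) ↔ charge m v := by
  have hmem : ∀ {H : Subgroup (Equiv.Perm ℕ)}, m.perm * (triv k).perm ∈ H →
      (m.perm * (triv k).perm) v ∈ MulAction.orbit H v := fun h => ⟨⟨_, h⟩, rfl⟩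
  have hΓ : gammaOrbit m ((m.perm * (triv k).perm) v) = gammaOrbit m v :=
    MulAction.orbit_eq_iff.2 <| hmem <| mul_mem (Subgroup.subset_closure (by simp))
      (Subgroup.subset_closure (by simp))
  have hσ := MulAction.orbit_eq_iff.2 (hmem (Subgroup.mem_zpowers (m.perm * (triv k).perm)))
  rw [charge, charge, hΓ, MulAction.mem_orbit_symm, hσ, ← MulAction.mem_orbit_symm]

lemma charge_iff_of_f_eq_top (m : PairPartition (k + 1)) {i : ℕ} (h : m.f i = 2 * (k + 1)) :
    charge m i ↔ charge m (2 * k + 1) := by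
  have hi : (m.perm * (triv (k + 1)).perm) (2 * k + 1) = i := by
    change m.f ((triv (k + 1)).f (2 * k + 1)) = i
    rw [triv_f_top, ← h, m.invol]
  rw [← hi, charge_perm_mul_triv_apply]

lemma omegab_eq_one_of_f_eq_top {R : Type*} [CommRing R] (b : R) (m : PairPartition (k + 1))
    {i : ℕ} (h : m.f i = 2 * (k + 1)) : omegab b m i (2 * k + 1) = 1 :=
  if_pos (charge_iff_of_f_eq_top m h)

lemma mapsTo_perm_Iic (m : PairPartition k) :
    Set.MapsTo m.perm (Set.Iic (2 * k)) (Set.Iic (2 * k)) :=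
  fun _ ha => m.f_le ha

lemma mapsTo_perm_Iic_of_f_top (m : PairPartition (k + 1)) (h : m.f (2 * k + 1) = 2 * (k + 1)) :
    Set.MapsTo m.perm (Set.Iic (2 * k)) (Set.Iic (2 * k)) := fun a (ha : a ≤ 2 * k) => by
  have h1 : m.f a ≠ 2 * k + 1 := fun he => by
    have := m.invol a; rw [he, h] at this; omega
  have h2 : m.f a ≠ 2 * (k + 1) := fun he => by
    have := m.invol a; rw [he, ← h, m.invol] at this; omega
  have := m.f_le (a := a) (by omega)
  change m.f a ≤ 2 * k
  omega

lemma eqOn_perm_down (m : PairPartition (k + 1)) (h : m.f (2 * k + 1) = 2 * (k + 1)) :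
    Set.EqOn m.perm (down m).perm (Set.Iic (2 * k)) := fun a (ha : a ≤ 2 * k) => by
  change m.f a = (down m).f a
  rw [down_f m h, if_neg (by omega)]

lemma eqOn_perm_triv : Set.EqOn (triv (k + 1)).perm (triv k).perm (Set.Iic (2 * k)) :=
  fun _ ha => triv_f_of_le (by omega) ha

lemma charge_down_iff (m : PairPartition (k + 1)) (h : m.f (2 * k + 1) = 2 * (k + 1)) {v : ℕ}
    (hv : v ≤ 2 * k) : charge (down m) v ↔ charge m v := by
  -- On `A = {0, …, 2k}` the involutions of level `k + 1` and their restrictions to level `k`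
  -- agree, so both the cycles of `Γ` and the charges computed in them are unchanged.
  set A : Set ℕ := Set.Iic (2 * k)
  have hA : A.Finite := Set.finite_Iic _
  have htA := mapsTo_perm_Iic (triv k)
  have hdA := mapsTo_perm_Iic (down m)
  have hgen : ∀ g ∈ ({(triv (k + 1)).perm, m.perm} : Set (Equiv.Perm ℕ)), Set.MapsTo g A A ∧
      ∃ g' ∈ ({(triv k).perm, (down m).perm} : Set (Equiv.Perm ℕ)), Set.EqOn g g' A := by
    simpa using ⟨⟨eqOn_perm_triv.mapsTo_iff.2 htA, .inl eqOn_perm_triv⟩,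
      mapsTo_perm_Iic_of_f_top m h, .inr (eqOn_perm_down m h)⟩
  have hΓ : gammaOrbit m v = gammaOrbit (down m) v :=
    Equiv.Perm.orbit_closure_eq_of_eqOn hA hgen (by
      simpa using ⟨⟨htA, .inl eqOn_perm_triv.symm⟩, hdA, .inr (eqOn_perm_down m h).symm⟩) hv
  have hΓA : gammaOrbit m v ⊆ A := fun x hx =>
    (Equiv.Perm.orbit_closure_subset_of_eqOn hA hgen hv hx).1
  have hM : sSup (gammaOrbit m v) ∈ A :=
    hΓA (Set.Nonempty.csSup_mem ⟨v, MulAction.mem_orbit_self v⟩ (hA.subset hΓA))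
  have hσ : Set.EqOn ⇑(m.perm * (triv (k + 1)).perm) ⇑((down m).perm * (triv k).perm) A :=
    fun a ha => by simp only [Equiv.Perm.mul_apply, eqOn_perm_triv ha, eqOn_perm_down m h (htA ha)]
  have hσA : Set.MapsTo ⇑((down m).perm * (triv k).perm) A A := hdA.comp htA
  have hZ := Equiv.Perm.orbit_closure_eq_of_eqOn (s := {m.perm * (triv (k + 1)).perm})
    (s' := {(down m).perm * (triv k).perm}) hA
    (by simpa using ⟨hσ.mapsTo_iff.2 hσA, hσ⟩) (by simpa using ⟨hσA, hσ.symm⟩) hM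
  rw [charge, charge, ← hΓ, Subgroup.zpowers_eq_closure, Subgroup.zpowers_eq_closure, hZ]
  rfl

lemma applyFacts_cons (t : ℕ × ℕ) (l : List (ℕ × ℕ)) (m : PairPartition k) :
    applyFacts (t :: l) m = swapAct t.1 t.2 (applyFacts l m) := rfl

lemma applyFacts_append_singleton (l : List (ℕ × ℕ)) (t : ℕ × ℕ) (m : PairPartition k) :
    applyFacts (l ++ [t]) m = applyFacts l (swapAct t.1 t.2 m) := by
  simp [applyFacts, List.foldr_append]

lemma flip_append_singleton (m : PairPartition k) (l : List (ℕ × ℕ)) (t : ℕ × ℕ) :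
    flip m (l ++ [t]) =
      flip (swapAct t.1 t.2 m) l + if charge m t.1 ↔ charge m t.2 then 0 else 1 := by
  induction l with
  | nil => rw [List.nil_append, flip, flip, flip, applyFacts, List.foldr_nil, add_zero, zero_add]
  | cons a l ih =>
    rw [List.cons_append, flip, flip, ih, applyFacts_append_singleton]
    ring

lemma hive_append_singleton (l : List (ℕ × ℕ)) (t : ℕ × ℕ) :
    hive (l ++ [t]) = if t.2 ∈ l.map Prod.snd then hive l else hive l + 1 := by
  simp only [hive, List.map_append, List.map_cons, List.map_nil, List.toFinset_append,
    List.toFinset_cons, List.toFinset_nil, insert_empty_eq, Finset.union_singleton]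
  split_ifs with h
  · rw [Finset.insert_eq_of_mem (List.mem_toFinset.2 h)]
  · rw [Finset.card_insert_of_notMem (mt List.mem_toFinset.1 h)]

lemma hive_le_of_forall_odd {l : List (ℕ × ℕ)} (h : ∀ t ∈ l, t.2 ≤ 2 * k ∧ Odd t.2) :
    hive l ≤ k := by
  -- `b ↦ b / 2` is injective on odd numbers and maps those below `2k` into `range k`.
  refine (Finset.card_le_card_of_injOn (· / 2) (t := Finset.range k) ?_ ?_).trans
    (Finset.card_range k).le
  · intro b hb
    obtain ⟨t, ht, rfl⟩ := List.mem_map.1 (List.mem_toFinset.1 hb)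
    have := Nat.odd_iff.1 (h t ht).2
    simp only [Finset.coe_range, Set.mem_Iio]; have := (h t ht).1; omega
  · intro b hb c hc (hbc : b / 2 = c / 2)
    obtain ⟨t, ht, rfl⟩ := List.mem_map.1 (List.mem_toFinset.1 hb)
    obtain ⟨s, hs, rfl⟩ := List.mem_map.1 (List.mem_toFinset.1 hc)
    have := Nat.odd_iff.1 (h t ht).2; have := Nat.odd_iff.1 (h s hs).2
    omega

lemma applyFacts_f_top_iff (m : PairPartition (k + 1)) {l : List (ℕ × ℕ)}
    (hl : ∀ t ∈ l, t.1 ≤ 2 * k ∧ t.2 ≤ 2 * k) :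
    (applyFacts l m).f (2 * k + 1) = 2 * (k + 1) ↔ m.f (2 * k + 1) = 2 * (k + 1) := by
  induction l with
  | nil => rfl
  | cons t l ih =>
    obtain ⟨ht, hl⟩ := List.forall_mem_cons.1 hl
    rw [applyFacts_cons, swapAct_f_top_iff_of_le _ ht.1 ht.2, ih hl]

lemma down_applyFacts (m : PairPartition (k + 1)) (h : m.f (2 * k + 1) = 2 * (k + 1))
    {l : List (ℕ × ℕ)} (hl : ∀ t ∈ l, t.1 ≤ 2 * k ∧ t.2 ≤ 2 * k) :
    down (applyFacts l m) = applyFacts l (down m) := by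
  induction l with
  | nil => rfl
  | cons t l ih =>
    obtain ⟨ht, hl'⟩ := List.forall_mem_cons.1 hl
    rw [applyFacts_cons, applyFacts_cons,
      down_swapAct _ ((applyFacts_f_top_iff m hl').2 h) ht.1 ht.2, ih hl']

lemma flip_down (m : PairPartition (k + 1)) (h : m.f (2 * k + 1) = 2 * (k + 1))
    {l : List (ℕ × ℕ)} (hl : ∀ t ∈ l, t.1 ≤ 2 * k ∧ t.2 ≤ 2 * k) :
    flip (down m) l = flip m l := by
  induction l with
  | nil => rfl
  | cons t l ih =>
    obtain ⟨ht, hl'⟩ := List.forall_mem_cons.1 hl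
    have hl'top := (applyFacts_f_top_iff m hl').2 h
    rw [flip, flip, ih hl', ← down_applyFacts m h hl', charge_down_iff _ hl'top ht.1,
      charge_down_iff _ hl'top ht.2]

lemma mem_listsLen {S : Finset (ℕ × ℕ)} {r : ℕ} {l : List (ℕ × ℕ)} :
    l ∈ listsLen S r ↔ l.length = r ∧ ∀ x ∈ l, x ∈ S := by
  induction r generalizing l with
  | zero => simp +contextual [listsLen, List.length_eq_zero_iff]
  | succ r ih =>
    cases l with
    | nil => simp [listsLen]
    | cons a l =>
      let cons : (ℕ × ℕ) × List (ℕ × ℕ) → List (ℕ × ℕ) := fun p => p.1 :: p.2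
      have hinj : Function.Injective cons :=
        fun p q h => Prod.ext (List.cons.inj h).1 (List.cons.inj h).2
      rw [listsLen]
      refine (hinj.mem_finset_image (a := (a, l))).trans ?_
      rw [Finset.mem_product, ih]
      simp [and_left_comm]

lemma mem_monoFinset {m : PairPartition k} {r : ℕ} {l : List (ℕ × ℕ)} :
    l ∈ monoFinset m r ↔ l.length = r ∧ IsMonoFact m l := by
  rw [monoFinset, Finset.mem_filter, mem_listsLen, and_assoc]
  refine and_congr_right fun _ => ⟨fun h => h.2, fun h => ⟨fun t ht => ?_, h⟩⟩
  have := h.1 t ht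
  simp only [Finset.mem_product, Finset.mem_Icc]
  omega

lemma IsMonoFact.le_of_not_mem {m : PairPartition (k + 1)} {l : List (ℕ × ℕ)}
    (hl : IsMonoFact m l) (htop : 2 * k + 1 ∉ l.map Prod.snd) :
    ∀ t ∈ l, t.1 ≤ 2 * k ∧ t.2 ≤ 2 * k := fun t ht => by
  have := hl.1 t ht
  have := Nat.odd_iff.1 this.2.2.2
  have : t.2 ≠ 2 * k + 1 := fun he => htop (List.mem_map.2 ⟨t, ht, he⟩)
  omega

lemma f_top_of_isMonoFact_of_not_mem {m : PairPartition (k + 1)} {l : List (ℕ × ℕ)}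
    (hl : IsMonoFact m l) (htop : 2 * k + 1 ∉ l.map Prod.snd) :
    m.f (2 * k + 1) = 2 * (k + 1) := by
  rw [← applyFacts_f_top_iff m (hl.le_of_not_mem htop), hl.2.2]
  exact triv_f_top

lemma monoFinset_filter_not_top (m : PairPartition (k + 1)) (h : m.f (2 * k + 1) = 2 * (k + 1))
    (r : ℕ) : (monoFinset m r).filter (fun l => 2 * k + 1 ∉ l.map Prod.snd) =
      monoFinset (down m) r := by
  ext l
  simp only [Finset.mem_filter, mem_monoFinset, IsMonoFact]
  constructor
  · rintro ⟨⟨hlen, hl, hsort, happ⟩, htop⟩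
    have hlow := IsMonoFact.le_of_not_mem ⟨hl, hsort, happ⟩ htop
    refine ⟨hlen, fun t ht => ⟨(hl t ht).1, (hl t ht).2.1, (hlow t ht).2, (hl t ht).2.2.2⟩,
      hsort, ?_⟩
    rw [← down_applyFacts m h hlow, happ]
    exact down_triv
  · rintro ⟨hlen, hl, hsort, happ⟩
    have hlow : ∀ t ∈ l, t.1 ≤ 2 * k ∧ t.2 ≤ 2 * k := fun t ht => by
      have := hl t ht; omega
    refine ⟨⟨hlen, fun t ht => ?_, hsort, ?_⟩, fun hmem => ?_⟩
    · have := hl t ht; exact ⟨this.1, this.2.1, by omega, this.2.2.2⟩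
    · rwa [← down_eq_triv_iff _ ((applyFacts_f_top_iff m hlow).2 h), down_applyFacts m h hlow]
    · obtain ⟨t, ht, he⟩ := List.mem_map.1 hmem
      have := (hl t ht).2.2.1; omega

lemma isMonoFact_append_top_iff (m : PairPartition (k + 1)) {i : ℕ} (hi : 1 ≤ i ∧ i ≤ 2 * k)
    (l : List (ℕ × ℕ)) :
    IsMonoFact m (l ++ [(i, 2 * k + 1)]) ↔ IsMonoFact (swapAct i (2 * k + 1) m) l := by
  simp only [IsMonoFact, List.mem_append, List.mem_singleton, List.map_append, List.map_cons,
    List.map_nil, List.pairwise_append, List.pairwise_singleton, applyFacts_append_singleton,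
    List.mem_map]
  constructor
  · rintro ⟨hl, ⟨hsort, -, -⟩, happ⟩
    exact ⟨fun t ht => hl t (.inl ht), hsort, happ⟩
  · rintro ⟨hl, hsort, happ⟩
    refine ⟨fun t ht => ?_, ⟨hsort, trivial, ?_⟩, happ⟩
    · rcases ht with ht | rfl
      · exact hl t ht
      · exact ⟨hi.1, by omega, by omega, by simp⟩
    · rintro _ ⟨t, ht, rfl⟩ _ rfl
      have := hl t ht
      have := Nat.odd_iff.1 this.2.2.2
      omega

lemma sum_monoFinset_filter_top {M : Type*} [AddCommMonoid M] (m : PairPartition (k + 1))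
    (r : ℕ) (g : List (ℕ × ℕ) → M) :
    ∑ l ∈ (monoFinset m (r + 1)).filter (fun l => 2 * k + 1 ∈ l.map Prod.snd), g l =
      ∑ i ∈ Finset.Icc 1 (2 * k), ∑ l ∈ monoFinset (swapAct i (2 * k + 1) m) r,
        g (l ++ [(i, 2 * k + 1)]) := by
  rw [← Finset.sum_sigma _ _ fun p => g (p.2 ++ [(p.1, 2 * k + 1)])]
  symm
  refine Finset.sum_bij (fun p _ => p.2 ++ [(p.1, 2 * k + 1)]) ?_ ?_ ?_ fun _ _ => rfl
  · rintro ⟨i, l⟩ hp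
    simp only [Finset.mem_sigma, Finset.mem_Icc, mem_monoFinset] at hp
    simp only [Finset.mem_filter, mem_monoFinset, isMonoFact_append_top_iff m hp.1]
    simp [hp.2]
  · rintro ⟨i, l⟩ - ⟨j, l'⟩ - h
    obtain ⟨rfl, h'⟩ := List.append_inj' h rfl
    simp only [List.cons.injEq, Prod.mk.injEq, and_true] at h'
    rw [h']
  · intro l hl
    simp only [Finset.mem_filter, mem_monoFinset] at hl
    obtain ⟨⟨hlen, hmono⟩, htop⟩ := hl
    obtain ⟨l', a, rfl⟩ := (List.eq_nil_or_concat' l).resolve_left (by rintro rfl; simp at htop)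
    -- The last transposition has the largest second entry, which must be `2k+1`.
    have ha : a.2 = 2 * k + 1 := by
      have hmax := (List.pairwise_append.1 (List.map_append ▸ hmono.2.1)).2.2
      have := hmono.1 a (by simp)
      have := Nat.odd_iff.1 this.2.2.2
      simp only [List.map_append, List.map_cons, List.map_nil, List.mem_append,
        List.mem_singleton] at htop hmax
      rcases htop with htop | htop
      · have := hmax _ htop a.2 (by simp); omega
      · omega
    have hi : 1 ≤ a.1 ∧ a.1 ≤ 2 * k := by have := hmono.1 a (by simp); omega
    obtain ⟨i, b⟩ := a
    subst ha
    refine ⟨⟨i, l'⟩, ?_, rfl⟩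
    rw [isMonoFact_append_top_iff m hi] at hmono
    simp only [Finset.mem_sigma, Finset.mem_Icc, mem_monoFinset]
    exact ⟨hi, by simpa using hlen, hmono⟩

noncomputable def monoWeight (m : PairPartition k) (j : ℕ) (l : List (ℕ × ℕ)) :
    MvPolynomial (Fin 2) ℤ :=
  X 0 ^ flip m l * (X 1 - 1) ^ hive l * X 1 ^ (j - hive l)

noncomputable def monoSum (m : PairPartition k) (r : ℕ) : MvPolynomial (Fin 2) ℤ :=
  ∑ l ∈ monoFinset m r, monoWeight m k l

noncomputable def monoSumTop (m : PairPartition (k + 1)) (r : ℕ) : MvPolynomial (Fin 2) ℤ :=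
  ∑ l ∈ (monoFinset m r).filter (fun l => 2 * k + 1 ∈ l.map Prod.snd), monoWeight m (k + 1) l

lemma sum_monoFinset_filter_not_top (m : PairPartition (k + 1)) (r : ℕ) :
    ∑ l ∈ (monoFinset m r).filter (fun l => 2 * k + 1 ∉ l.map Prod.snd), monoWeight m k l =
      if m.f (2 * k + 1) = 2 * (k + 1) then monoSum (down m) r else 0 := by
  split_ifs with h
  · rw [monoFinset_filter_not_top m h, monoSum]
    refine Finset.sum_congr rfl fun l hl => ?_
    have hlow := (mem_monoFinset.1 hl).2.1
    rw [monoWeight, monoWeight, flip_down m h fun t ht => by have := hlow t ht; omega]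
    rfl
  · refine Finset.sum_eq_zero fun l hl => absurd ?_ h
    simp only [Finset.mem_filter, mem_monoFinset] at hl
    exact f_top_of_isMonoFact_of_not_mem hl.1.2 hl.2

lemma monoSum_succ (m : PairPartition (k + 1)) (r : ℕ) :
    monoSum m r = monoSumTop m r +
      if m.f (2 * k + 1) = 2 * (k + 1) then X 1 * monoSum (down m) r else 0 := by
  have hweight : ∀ l ∈ (monoFinset m r).filter (fun l => 2 * k + 1 ∉ l.map Prod.snd),
      monoWeight m (k + 1) l = X 1 * monoWeight m k l := fun l hl => by
    simp only [Finset.mem_filter, mem_monoFinset] at hl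
    have hlow := hl.1.2.le_of_not_mem hl.2
    have : hive l ≤ k :=
      hive_le_of_forall_odd fun t ht => ⟨(hlow t ht).2, (hl.1.2.1 t ht).2.2.2⟩
    rw [monoWeight, monoWeight, show k + 1 - hive l = k - hive l + 1 by omega, pow_succ]
    ring
  rw [monoSum, monoSumTop,
    ← Finset.sum_filter_add_sum_filter_not _ (2 * k + 1 ∈ ·.map Prod.snd),
    Finset.sum_congr rfl hweight, ← Finset.mul_sum, sum_monoFinset_filter_not_top, mul_ite,
    mul_zero]

lemma monoSumTop_zero (m : PairPartition (k + 1)) : monoSumTop m 0 = 0 :=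
  Finset.sum_eq_zero fun l hl => by
    simp only [Finset.mem_filter, mem_monoFinset, List.length_eq_zero_iff] at hl
    simp [hl.1.1] at hl

lemma monoWeight_append_top (m : PairPartition (k + 1)) (l : List (ℕ × ℕ)) (i : ℕ) :
    monoWeight m (k + 1) (l ++ [(i, 2 * k + 1)]) = omegab (X 0) m i (2 * k + 1) *
      if 2 * k + 1 ∈ l.map Prod.snd then monoWeight (swapAct i (2 * k + 1) m) (k + 1) l
      else (X 1 - 1) * monoWeight (swapAct i (2 * k + 1) m) k l := by
  rw [monoWeight, monoWeight, monoWeight, flip_append_singleton, hive_append_singleton, omegab]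
  split_ifs <;> simp only [Nat.add_sub_add_right, pow_succ, pow_add] <;> ring

lemma monoSumTop_succ (m : PairPartition (k + 1)) (r : ℕ) :
    monoSumTop m (r + 1) = ∑ i ∈ Finset.Icc 1 (2 * k), omegab (X 0) m i (2 * k + 1) *
      (monoSumTop (swapAct i (2 * k + 1) m) r +
        if m.f i = 2 * (k + 1) then (X 1 - 1) * monoSum (down (swapAct i (2 * k + 1) m)) r
        else 0) := by
  rw [monoSumTop, sum_monoFinset_filter_top]
  refine Finset.sum_congr rfl fun i hi => ?_
  rw [Finset.mem_Icc] at hi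
  simp only [monoWeight_append_top, ← Finset.mul_sum, Finset.sum_ite,
    sum_monoFinset_filter_not_top, swapAct_top_f_top_iff m hi.1 hi.2, monoSumTop]
  split_ifs <;> ring

lemma monoSum_of_level_zero (m : PairPartition 0) (r : ℕ) :
    monoSum m r = if r = 0 then 1 else 0 := by
  have hmono : monoFinset m r = if r = 0 then {[]} else ∅ := by
    ext l
    rw [mem_monoFinset, eq_triv_of_level_zero m]
    split_ifs with hr
    · subst hr
      simp +contextual [List.length_eq_zero_iff, IsMonoFact, applyFacts]
    · simp only [Finset.notMem_empty, iff_false, not_and]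
      rintro hlen ⟨hl, -⟩
      obtain ⟨t, ht⟩ := List.exists_mem_of_length_pos (l := l) (by omega)
      have := hl t ht
      omega
  rw [monoSum, hmono]
  split_ifs <;> simp [monoWeight, flip, hive]

@[simp] lemma countA_cons_A (i : ℕ) (l : List WStep) : countA (.A i :: l) = countA l + 1 := by
  simp [countA]
@[simp] lemma countA_cons_B (l : List WStep) : countA (.B :: l) = countA l := by simp [countA]
@[simp] lemma countA_cons_C (i : ℕ) (l : List WStep) : countA (.C i :: l) = countA l := by
  simp [countA]
@[simp] lemma countB_cons_A (i : ℕ) (l : List WStep) : countB (.A i :: l) = countB l := by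
  simp [countB]
@[simp] lemma countB_cons_B (l : List WStep) : countB (.B :: l) = countB l + 1 := by simp [countB]
@[simp] lemma countB_cons_C (i : ℕ) (l : List WStep) : countB (.C i :: l) = countB l := by
  simp [countB]
@[simp] lemma countC_cons_A (i : ℕ) (l : List WStep) : countC (.A i :: l) = countC l := by
  simp [countC]
@[simp] lemma countC_cons_B (l : List WStep) : countC (.B :: l) = countC l := by simp [countC]
@[simp] lemma countC_cons_C (i : ℕ) (l : List WStep) : countC (.C i :: l) = countC l + 1 := by
  simp [countC]

@[simp] lemma isPathTo_zero (m : PairPartition 0) (ρ : List WStep) :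
    IsPathTo 0 m ρ ↔ ρ = [] := by
  rcases ρ with _ | ⟨_ | _ | _, _⟩ <;> simp [IsPathTo]

@[simp] lemma not_isPathTo_nil (m : PairPartition (k + 1)) : ¬IsPathTo (k + 1) m [] := id

@[simp] lemma isPathTo_cons_A (m : PairPartition (k + 1)) (i : ℕ) (ρ : List WStep) :
    IsPathTo (k + 1) m (.A i :: ρ) ↔
      (1 ≤ i ∧ i ≤ 2 * k) ∧ IsPathTo (k + 1) (swapAct i (2 * k + 1) m) ρ := by
  simp only [IsPathTo, show 2 * (k + 1) - 2 = 2 * k by omega,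
    show 2 * (k + 1) - 1 = 2 * k + 1 by omega, and_assoc]

@[simp] lemma isPathTo_cons_B (m : PairPartition (k + 1)) (ρ : List WStep) :
    IsPathTo (k + 1) m (.B :: ρ) ↔ m.f (2 * k + 1) = 2 * (k + 1) ∧ IsPathTo k (down m) ρ := by
  simp only [IsPathTo, show 2 * (k + 1) - 1 = 2 * k + 1 by omega]

@[simp] lemma isPathTo_cons_C (m : PairPartition (k + 1)) (i : ℕ) (ρ : List WStep) :
    IsPathTo (k + 1) m (.C i :: ρ) ↔ (1 ≤ i ∧ i ≤ 2 * k) ∧ m.f i = 2 * (k + 1) ∧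
      IsPathTo k (down (swapAct i (2 * k + 1) m)) ρ := by
  simp only [IsPathTo, show 2 * (k + 1) - 2 = 2 * k by omega,
    show 2 * (k + 1) - 1 = 2 * k + 1 by omega, and_assoc]

def stepFinset (k : ℕ) : Finset WStep :=
  insert .B ((Finset.Icc 1 (2 * k)).image .A ∪ (Finset.Icc 1 (2 * k)).image .C)

@[simp] lemma A_mem_stepFinset {i : ℕ} : .A i ∈ stepFinset k ↔ 1 ≤ i ∧ i ≤ 2 * k := by
  simp [stepFinset]

@[simp] lemma B_mem_stepFinset : .B ∈ stepFinset k := by simp [stepFinset]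

@[simp] lemma C_mem_stepFinset {i : ℕ} : .C i ∈ stepFinset k ↔ 1 ≤ i ∧ i ≤ 2 * k := by
  simp [stepFinset]

lemma sum_stepFinset {M : Type*} [AddCommMonoid M] (F : WStep → M) :
    ∑ s ∈ stepFinset k, F s =
      ∑ i ∈ Finset.Icc 1 (2 * k), F (.A i) + F .B +
        ∑ i ∈ Finset.Icc 1 (2 * k), F (.C i) := by
  rw [stepFinset, Finset.sum_insert (by simp),
    Finset.sum_union (Finset.disjoint_left.2 (by simp +contextual [eq_comm])),
    Finset.sum_image (by simp), Finset.sum_image (by simp)]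
  abel

lemma stepFinset_mono {k k' : ℕ} (h : k ≤ k') : stepFinset k ⊆ stepFinset k' := by
  rintro (_ | _ | _) <;> simp <;> omega

lemma IsPathTo.length_eq_and_mem_stepFinset :
    ∀ {k : ℕ} {m : PairPartition k} {ρ : List WStep}, IsPathTo k m ρ →
      ρ.length = countA ρ + k ∧ ∀ s ∈ ρ, s ∈ stepFinset k
  | 0, m, ρ, h => by simp_all [countA]
  | k + 1, m, [], h => absurd h (not_isPathTo_nil m)
  | k + 1, m, .A i :: ρ, h => by
    simp only [isPathTo_cons_A] at h
    obtain ⟨hlen, hmem⟩ := length_eq_and_mem_stepFinset h.2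
    refine ⟨by simp [hlen]; omega, ?_⟩
    simp only [List.mem_cons, forall_eq_or_imp, A_mem_stepFinset]
    exact ⟨by omega, hmem⟩
  | k + 1, m, .B :: ρ, h => by
    simp only [isPathTo_cons_B] at h
    obtain ⟨hlen, hmem⟩ := length_eq_and_mem_stepFinset h.2
    refine ⟨by simp [hlen]; omega, ?_⟩
    simp only [List.mem_cons, forall_eq_or_imp, B_mem_stepFinset, true_and]
    exact fun s hs => stepFinset_mono (by omega) (hmem s hs)
  | k + 1, m, .C i :: ρ, h => by
    simp only [isPathTo_cons_C] at h
    obtain ⟨hlen, hmem⟩ := length_eq_and_mem_stepFinset h.2.2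
    refine ⟨by simp [hlen]; omega, ?_⟩
    simp only [List.mem_cons, forall_eq_or_imp, C_mem_stepFinset]
    exact ⟨by omega, fun s hs => stepFinset_mono (by omega) (hmem s hs)⟩

lemma finite_setOf_isPathTo (k : ℕ) (m : PairPartition k) (n : ℕ) :
    {ρ | IsPathTo k m ρ ∧ countA ρ + countC ρ = n}.Finite :=
  (List.finite_setOf_length_le_forall_mem (stepFinset k).finite_toSet (n + k)).subset
    fun _ ⟨hρ, hn⟩ => by
      obtain ⟨hlen, hmem⟩ := hρ.length_eq_and_mem_stepFinset
      exact ⟨by omega, hmem⟩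

noncomputable def pathFinset (k : ℕ) (m : PairPartition k) (n : ℕ) : Finset (List WStep) :=
  (finite_setOf_isPathTo k m n).toFinset

@[simp] lemma mem_pathFinset {m : PairPartition k} {n : ℕ} {ρ : List WStep} :
    ρ ∈ pathFinset k m n ↔ IsPathTo k m ρ ∧ countA ρ + countC ρ = n :=
  Set.Finite.mem_toFinset _

noncomputable def signedWeight (k : ℕ) (m : PairPartition k) (ρ : List WStep) :
    MvPolynomial (Fin 2) ℤ :=
  (-1) ^ countA ρ * X 1 ^ countB ρ * pathWeight (X 0) k m ρ

lemma coeff_WgBT_eq_sum_pathFinset (k : ℕ) (m : PairPartition k) (n : ℕ) :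
    PowerSeries.coeff n (WgBT k m) = ∑ ρ ∈ pathFinset k m n, signedWeight k m ρ := by
  rw [WgBT, PowerSeries.coeff_mk]
  exact finsum_mem_eq_finite_toFinset_sum _ (finite_setOf_isPathTo k m n)

lemma signedWeight_cons_A (m : PairPartition (k + 1)) (i : ℕ) (ρ : List WStep) :
    signedWeight (k + 1) m (.A i :: ρ) =
      -omegab (X 0) m i (2 * k + 1) * signedWeight (k + 1) (swapAct i (2 * k + 1) m) ρ := by
  simp only [signedWeight, pathWeight, countA_cons_A, countB_cons_A,
    show 2 * (k + 1) - 1 = 2 * k + 1 by omega]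
  ring

lemma signedWeight_cons_B (m : PairPartition (k + 1)) (ρ : List WStep) :
    signedWeight (k + 1) m (.B :: ρ) = X 1 * signedWeight k (down m) ρ := by
  simp only [signedWeight, pathWeight, countA_cons_B, countB_cons_B]
  ring

lemma signedWeight_cons_C (m : PairPartition (k + 1)) (i : ℕ) (ρ : List WStep) :
    signedWeight (k + 1) m (.C i :: ρ) = signedWeight k (down (swapAct i (2 * k + 1) m)) ρ := by
  simp only [signedWeight, pathWeight, countA_cons_C, countB_cons_C,
    show 2 * (k + 1) - 1 = 2 * k + 1 by omega]

lemma coeff_WgBT_of_level_zero (m : PairPartition 0) (n : ℕ) :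
    PowerSeries.coeff n (WgBT 0 m) = if n = 0 then 1 else 0 := by
  have hpaths : pathFinset 0 m n = if n = 0 then {[]} else ∅ := by
    ext ρ
    split_ifs with hn <;> simp +contextual [hn, countA, countC, eq_comm]
  rw [coeff_WgBT_eq_sum_pathFinset, hpaths]
  split_ifs <;> simp [signedWeight, countA, countB, pathWeight]

lemma coeff_zero_WgBT_succ (m : PairPartition (k + 1)) :
    PowerSeries.coeff 0 (WgBT (k + 1) m) =
      if m.f (2 * k + 1) = 2 * (k + 1) then X 1 * PowerSeries.coeff 0 (WgBT k (down m)) else 0 := by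
  rw [coeff_WgBT_eq_sum_pathFinset, Finset.sum_eq_sum_sum_cons {.B}
    (fun _ => if m.f (2 * k + 1) = 2 * (k + 1) then pathFinset k (down m) 0 else ∅)
    (by simp) (by rintro (_ | _ | _) ρ <;> simp [mem_ite]; tauto)]
  simp only [Finset.sum_singleton, Finset.sum_ite_index, Finset.sum_empty, signedWeight_cons_B,
    ← Finset.mul_sum, coeff_WgBT_eq_sum_pathFinset]

lemma coeff_succ_WgBT_succ (m : PairPartition (k + 1)) (n : ℕ) :
    PowerSeries.coeff (n + 1) (WgBT (k + 1) m) =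
      ∑ i ∈ Finset.Icc 1 (2 * k), -omegab (X 0) m i (2 * k + 1) *
          PowerSeries.coeff n (WgBT (k + 1) (swapAct i (2 * k + 1) m)) +
        (if m.f (2 * k + 1) = 2 * (k + 1) then X 1 * PowerSeries.coeff (n + 1) (WgBT k (down m))
          else 0) +
        ∑ i ∈ Finset.Icc 1 (2 * k), if m.f i = 2 * (k + 1) then
          PowerSeries.coeff n (WgBT k (down (swapAct i (2 * k + 1) m))) else 0 := by
  rw [coeff_WgBT_eq_sum_pathFinset, Finset.sum_eq_sum_sum_cons (stepFinset k) (fun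
      | .A i => pathFinset (k + 1) (swapAct i (2 * k + 1) m) n
      | .B => if m.f (2 * k + 1) = 2 * (k + 1) then pathFinset k (down m) (n + 1) else ∅
      | .C i => if m.f i = 2 * (k + 1) then pathFinset k (down (swapAct i (2 * k + 1) m)) n
          else ∅)
    (by simp) (by
      rintro (_ | _ | _) ρ <;> simp [mem_ite, ← add_assoc, add_right_comm _ 1] <;> tauto)]
  simp only [sum_stepFinset, Finset.sum_ite_index, Finset.sum_empty, signedWeight_cons_A,
    signedWeight_cons_B, signedWeight_cons_C, ← Finset.mul_sum, coeff_WgBT_eq_sum_pathFinset,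
    mul_ite, mul_zero]

theorem coeff_WgBT_eq_monoSum (k : ℕ) (m : PairPartition k) (n : ℕ) :
    PowerSeries.coeff n (WgBT k m) = (-1) ^ n * monoSum m n := by
  induction k generalizing n with
  | zero =>
    rw [coeff_WgBT_of_level_zero, monoSum_of_level_zero]
    split_ifs with hn <;> simp [hn]
  | succ k ihk =>
    induction n generalizing m with
    | zero =>
      rw [coeff_zero_WgBT_succ, monoSum_succ, monoSumTop_zero, ihk]
      split_ifs <;> ring
    | succ n ihn =>
      have hstep : ∀ i ∈ Finset.Icc 1 (2 * k),
          -omegab (X 0) m i (2 * k + 1) *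
              ((-1) ^ n * monoSum (swapAct i (2 * k + 1) m) n) +
            (if m.f i = 2 * (k + 1) then
              (-1) ^ n * monoSum (down (swapAct i (2 * k + 1) m)) n else 0) =
          (-1) ^ (n + 1) * (omegab (X 0) m i (2 * k + 1) *
            (monoSumTop (swapAct i (2 * k + 1) m) n +
              if m.f i = 2 * (k + 1) then
                (X 1 - 1) * monoSum (down (swapAct i (2 * k + 1) m)) n else 0)) := by
        intro i hi
        rw [Finset.mem_Icc] at hi
        simp only [monoSum_succ, swapAct_top_f_top_iff m hi.1 hi.2]
        split_ifs with h
        · rw [omegab_eq_one_of_f_eq_top _ m h]; ring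
        · ring
      rw [coeff_succ_WgBT_succ, monoSum_succ m, monoSumTop_succ]
      simp only [ihn, ihk]
      rw [add_right_comm, ← Finset.sum_add_distrib, Finset.sum_congr rfl hstep,
        ← Finset.mul_sum]
      split_ifs <;> ring

end PairPartition

theorem expansion_WgBT_monotone_general
    (k : ℕ) (m : PairPartition k) :
    WgBT k m =
      PowerSeries.mk (fun r =>
        (-1 : MvPolynomial (Fin 2) ℤ) ^ r *
          ∑ l ∈ monoFinset m r,
            (MvPolynomial.X 0 : MvPolynomial (Fin 2) ℤ) ^ flip m l *
              (MvPolynomial.X 1 - 1) ^ hive l *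
              (MvPolynomial.X 1) ^ (k - hive l)) :=
  PowerSeries.ext fun n => by
    rw [PowerSeries.coeff_mk, PairPartition.coeff_WgBT_eq_monoSum]
    rfl

/-- **Expansion of the `bt`-Weingarten function via flip- and hive-weighted monotone
factorisations** (Proposition 4.13 / 4.16).  For every `k ≥ 1` and `𝔪 ∈ 𝒫_k`, in
`(ℤ[b,y])⟦X⟧` (`b = X 0`, `y = X 1`):
`Wg^(bt)(𝔪) = ∑_{r ≥ 0} (-X)^r ∑_{τ ∈ Mono(𝔪), ℓ(τ)=r}
  b^{flip(τ)} (y-1)^{hive(τ)} y^{k - hive(τ)}`. -/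
theorem expansion_WgBT_monotone
    (k : ℕ) (hk : 1 ≤ k) (m : PairPartition k) :
    WgBT k m =
      PowerSeries.mk (fun r =>
        (-1 : MvPolynomial (Fin 2) ℤ) ^ r *
          ∑ l ∈ monoFinset m r,
            (MvPolynomial.X 0 : MvPolynomial (Fin 2) ℤ) ^ flip m l *
              (MvPolynomial.X 1 - 1) ^ hive l *
              (MvPolynomial.X 1) ^ (k - hive l)) :=
  expansion_WgBT_monotone_general k m
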